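/- arXiv:1210.2031 — 2 statements merged into one kernel-verified Lean document; each statement's English description precedes it below -/
import Mathlib

section
/- Let h : {1,2} × {1,2,…,n} × {1,…,n} → ℝ (for two normal indices α ∈ {1,2}) satisfy: full symmetry h_{α,ijk} = h_{α,ikj} and h_{α,ijk} = h_{α,jik}; the trace condition h_{α,11k} + h_{α,22k} = 0 for all k; and h_{α,ijk} = 0 whenever i ≥ 3 and j ≥ 3. Then ∑_{α∈{1,2}} ∑_{i,j,k} h_{α,ijk}² ≥ 4 ∑_k h_{1,11k}² + 4 ∑_k h_{2,12k}². -/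
/-!
Fix `α`, two distinct indices `p, q`, and write `a k = h p p k`, `b k = h p q k`. Symmetry and
the trace condition make every slice `(h i j k)_{i,j ∈ {p,q}}` have squared norm
`2 (a k ^ 2 + b k ^ 2)`, and force `a p ^ 2 + a q ^ 2 = b p ^ 2 + b q ^ 2`. Summing the squares
over the triples `(i, j, k)` with `i, j ∈ {p,q}`, and over those with `i ∉ {p,q}`, `j, k ∈ {p,q}`,
gives `∑ h ^ 2 ≥ 4 (a p ^ 2 + a q ^ 2) + 4 ∑_{k ∉ {p,q}} (a k ^ 2 + b k ^ 2)`, which dominates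
both `4 ∑ a k ^ 2` and `4 ∑ b k ^ 2`.
-/

open Finset

theorem sum_sum_sum_restrict_add_compl_le {ι : Type*} [Fintype ι] [DecidableEq ι]
    (s : Finset ι) (g : ι → ι → ι → ℝ) (hg : ∀ i j k, 0 ≤ g i j k) :
    ∑ i ∈ s, ∑ j ∈ s, ∑ k, g i j k + ∑ i ∈ sᶜ, ∑ j ∈ s, ∑ k ∈ s, g i j k
      ≤ ∑ i, ∑ j, ∑ k, g i j k := by
  have row_nonneg : ∀ i j, 0 ≤ ∑ k, g i j k := fun i j => sum_nonneg fun k _ => hg i j k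
  rw [← sum_add_sum_compl s]
  refine add_le_add (sum_le_sum fun i _ => ?_) (sum_le_sum fun i _ => ?_)
  · exact sum_le_sum_of_subset_of_nonneg (subset_univ s) fun j _ _ => row_nonneg i j
  · calc ∑ j ∈ s, ∑ k ∈ s, g i j k
        ≤ ∑ j ∈ s, ∑ k, g i j k :=
          sum_le_sum fun j _ => sum_le_sum_of_subset_of_nonneg (subset_univ s) fun k _ _ => hg i j k
      _ ≤ ∑ j, ∑ k, g i j k :=
          sum_le_sum_of_subset_of_nonneg (subset_univ s) fun j _ _ => row_nonneg i j

section SymmetricTensor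

variable {ι : Type*} {h : ι → ι → ι → ℝ}

theorem sq_add_sq_mixed_eq (hsym1 : ∀ i j k, h i j k = h i k j)
    (hsym2 : ∀ i j k, h i j k = h j i k) {p q : ι} (htrace : ∀ k, h p p k + h q q k = 0) :
    h p q p ^ 2 + h p q q ^ 2 = h p p p ^ 2 + h p p q ^ 2 := by
  have hpqq : h p q q = -h p p p := by
    rw [hsym2, hsym1, eq_neg_of_add_eq_zero_right (htrace p)]
  rw [hsym1 p q p, hpqq]
  ring

variable [DecidableEq ι]

theorem sum_pair_sum_pair_sq (hsym2 : ∀ i j k, h i j k = h j i k) {p q : ι} (hpq : p ≠ q)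
    (htrace : ∀ k, h p p k + h q q k = 0) (k : ι) :
    ∑ i ∈ {p, q}, ∑ j ∈ {p, q}, h i j k ^ 2 = 2 * (h p p k ^ 2 + h p q k ^ 2) := by
  rw [sum_pair hpq, sum_pair hpq, sum_pair hpq, hsym2 q p k,
    eq_neg_of_add_eq_zero_right (htrace k)]
  ring

variable [Fintype ι]

theorem two_mul_sum_sq_add_two_mul_sum_compl_sq_le (hsym1 : ∀ i j k, h i j k = h i k j)
    (hsym2 : ∀ i j k, h i j k = h j i k) {p q : ι} (hpq : p ≠ q)
    (htrace : ∀ k, h p p k + h q q k = 0) :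
    2 * ∑ k, (h p p k ^ 2 + h p q k ^ 2) + 2 * ∑ k ∈ {p, q}ᶜ, (h p p k ^ 2 + h p q k ^ 2)
      ≤ ∑ i, ∑ j, ∑ k, h i j k ^ 2 := by
  have hcycle : ∀ i j k, h i j k = h j k i := fun i j k => by rw [hsym2, hsym1]
  have hslice := sum_pair_sum_pair_sq hsym2 hpq htrace
  convert sum_sum_sum_restrict_add_compl_le {p, q} (fun i j k => h i j k ^ 2)
    (fun _ _ _ => sq_nonneg _) using 2
  · rw [sum_comm_cycle, mul_sum]
    exact sum_congr rfl fun k _ => (hslice k).symm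
  · rw [mul_sum]
    refine sum_congr rfl fun i _ => ?_
    rw [← hslice i]
    exact sum_congr rfl fun j _ => sum_congr rfl fun k _ => by rw [hcycle i j k]

theorem four_mul_sq_add_four_mul_sum_compl_sq_le (hsym1 : ∀ i j k, h i j k = h i k j)
    (hsym2 : ∀ i j k, h i j k = h j i k) {p q : ι} (hpq : p ≠ q)
    (htrace : ∀ k, h p p k + h q q k = 0) :
    4 * (h p p p ^ 2 + h p p q ^ 2) + 4 * ∑ k ∈ {p, q}ᶜ, (h p p k ^ 2 + h p q k ^ 2)
      ≤ ∑ i, ∑ j, ∑ k, h i j k ^ 2 := by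
  have hbound := two_mul_sum_sq_add_two_mul_sum_compl_sq_le hsym1 hsym2 hpq htrace
  have hcorner := sq_add_sq_mixed_eq hsym1 hsym2 htrace
  rw [← sum_add_sum_compl {p, q} (fun k => h p p k ^ 2 + h p q k ^ 2), sum_pair hpq] at hbound
  linarith

theorem four_mul_sum_sq_le (hsym1 : ∀ i j k, h i j k = h i k j)
    (hsym2 : ∀ i j k, h i j k = h j i k) {p q : ι} (hpq : p ≠ q)
    (htrace : ∀ k, h p p k + h q q k = 0) :
    4 * ∑ k, h p p k ^ 2 ≤ ∑ i, ∑ j, ∑ k, h i j k ^ 2 := by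
  have hbound := four_mul_sq_add_four_mul_sum_compl_sq_le hsym1 hsym2 hpq htrace
  have hmixed : 0 ≤ ∑ k ∈ {p, q}ᶜ, h p q k ^ 2 := sum_nonneg fun k _ => sq_nonneg _
  rw [sum_add_distrib] at hbound
  rw [← sum_add_sum_compl {p, q}, sum_pair hpq]
  linarith

theorem four_mul_sum_mixed_sq_le (hsym1 : ∀ i j k, h i j k = h i k j)
    (hsym2 : ∀ i j k, h i j k = h j i k) {p q : ι} (hpq : p ≠ q)
    (htrace : ∀ k, h p p k + h q q k = 0) :
    4 * ∑ k, h p q k ^ 2 ≤ ∑ i, ∑ j, ∑ k, h i j k ^ 2 := by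
  have hbound := four_mul_sq_add_four_mul_sum_compl_sq_le hsym1 hsym2 hpq htrace
  have hcorner := sq_add_sq_mixed_eq hsym1 hsym2 htrace
  have hpure : 0 ≤ ∑ k ∈ {p, q}ᶜ, h p p k ^ 2 := sum_nonneg fun k _ => sq_nonneg _
  rw [sum_add_distrib] at hbound
  rw [← sum_add_sum_compl {p, q}, sum_pair hpq]
  linarith

end SymmetricTensor

theorem stmt16_general (n : ℕ) (h : Fin 2 → Fin (n + 2) → Fin (n + 2) → Fin (n + 2) → ℝ)
    (hsym1 : ∀ α i j k, h α i j k = h α i k j)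
    (hsym2 : ∀ α i j k, h α i j k = h α j i k)
    (htrace : ∀ α k, h α 0 0 k + h α 1 1 k = 0) :
    ∑ α, ∑ i, ∑ j, ∑ k, (h α i j k)^2
      ≥ 4 * ∑ k, (h 0 0 0 k)^2 + 4 * ∑ k, (h 1 0 1 k)^2 := by
  have h01 : (0 : Fin (n + 2)) ≠ 1 := by simp
  rw [Fin.sum_univ_two]
  exact add_le_add (four_mul_sum_sq_le (hsym1 0) (hsym2 0) h01 (htrace 0))
    (four_mul_sum_mixed_sq_le (hsym1 1) (hsym2 1) h01 (htrace 1))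

/-- For coefficients h_{α,ijk} (α ∈ {1,2}, 1 ≤ i,j,k ≤ n, n ≥ 2) fully
symmetric in i,j,k, satisfying h_{α,11k} + h_{α,22k} = 0 and vanishing whenever
i ≥ 3 and j ≥ 3, one has
∑_{α,i,j,k} h_{α,ijk}² ≥ 4∑_k h_{1,11k}² + 4∑_k h_{2,12k}². (Indices 0-based here.) -/
theorem stmt16 (n : ℕ) (h : Fin 2 → Fin (n + 2) → Fin (n + 2) → Fin (n + 2) → ℝ)
    (hsym1 : ∀ α i j k, h α i j k = h α i k j)
    (hsym2 : ∀ α i j k, h α i j k = h α j i k)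
    (htrace : ∀ α k, h α 0 0 k + h α 1 1 k = 0)
    (hvanish : ∀ α (i j k : Fin (n + 2)), 2 ≤ (i : ℕ) → 2 ≤ (j : ℕ) → h α i j k = 0) :
    ∑ α, ∑ i, ∑ j, ∑ k, (h α i j k)^2
      ≥ 4 * ∑ k, (h 0 0 0 k)^2 + 4 * ∑ k, (h 1 0 1 k)^2 :=
  stmt16_general n h hsym1 hsym2 htrace
end

section
/- Let M be a Riemannian manifold and let b, v : M → ℝ be smooth positive functions satisfying Δ(b²) ≥ 4|∇b|² − 3b⁴ and Δv ≥ b² v + v⁻¹|∇v|². Then for all real s, q ≥ 1, Δ(b^{2s} v^q) ≥ (q − 3s) b^{2s+2} v^q. -/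
/-! Put `B = b ^ 2s` and `V = v ^ q`, so that `Δ(BV) = B ΔV + V ΔB + 2 Γ(B, V)`. The chain rule
turns the two hypotheses into `ΔB ≥ b^(2s-2) (4s² |∇b|² - 3s b⁴)` and
`ΔV ≥ v^(q-2) (q b² v² + q² |∇v|²)`. After factoring out `b^(2s-2) v^(q-2)`, the gradient terms
and the cross term `2 Γ(B, V)` combine into `|2s v ∇b + q b ∇v|² ≥ 0`, by Cauchy–Schwarz for `Γ`,
and what is left is `(q - 3s) b^(2s+2) v^q`. -/

theorem quadratic_form_nonneg_of_sq_le_mul {a c X Y Z : ℝ} (hX : 0 ≤ X) (hY : 0 ≤ Y)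
    (hZ : Z ^ 2 ≤ X * Y) : 0 ≤ a ^ 2 * X + c ^ 2 * Y + 2 * a * c * Z := by
  have hsum : 0 ≤ a ^ 2 * X + c ^ 2 * Y := by positivity
  have hsq : (2 * a * c * Z) ^ 2 ≤ (a ^ 2 * X + c ^ 2 * Y) ^ 2 := by
    nlinarith [sq_nonneg (a ^ 2 * X - c ^ 2 * Y), mul_nonneg (sq_nonneg (a * c)) (sub_nonneg.2 hZ)]
  linarith [(abs_le_of_sq_le_sq' hsq hsum).1]

theorem Real.rpow_eq_rpow_mul_pow_of_eq_add {x : ℝ} (hx : x ≠ 0) {a b : ℝ} (n : ℕ)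
    (h : a = b + n) : x ^ a = x ^ b * x ^ n := by
  rw [h, Real.rpow_add_natCast hx]

section CarreDuChamp

variable {M : Type*} {Δ : (M → ℝ) → M → ℝ} {Γ : (M → ℝ) → (M → ℝ) → M → ℝ}

theorem carreDuChamp_comm
    (hprod : ∀ f g : M → ℝ, ∀ x,
      Δ (fun y => f y * g y) x = f x * Δ g x + g x * Δ f x + 2 * Γ f g x)
    (f g : M → ℝ) : Γ f g = Γ g f := by
  funext x
  have hfg := hprod f g x
  have hgf := hprod g f x
  simp only [mul_comm (g _) (f _)] at hgf
  linarith

theorem carreDuChamp_rpow_rpow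
    (hprod : ∀ f g : M → ℝ, ∀ x,
      Δ (fun y => f y * g y) x = f x * Δ g x + g x * Δ f x + 2 * Γ f g x)
    (hΓpow : ∀ (f g : M → ℝ) (a : ℝ), (∀ y, 0 < f y) → ∀ x,
      Γ (fun y => f y ^ a) g x = a * f x ^ (a - 1) * Γ f g x)
    {f g : M → ℝ} (hf : ∀ y, 0 < f y) (hg : ∀ y, 0 < g y) (a c : ℝ) (x : M) :
    Γ (fun y => f y ^ a) (fun y => g y ^ c) x
      = a * c * f x ^ (a - 1) * g x ^ (c - 1) * Γ f g x := by
  rw [hΓpow f _ a hf, carreDuChamp_comm hprod f, hΓpow g f c hg, carreDuChamp_comm hprod g]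
  ring

variable (hΔpow : ∀ (f : M → ℝ) (a : ℝ), (∀ y, 0 < f y) → ∀ x,
      Δ (fun y => f y ^ a) x
        = a * f x ^ (a - 1) * Δ f x + a * (a - 1) * f x ^ (a - 2) * Γ f f x)
include hΔpow

theorem laplacian_rpow_two_mul_ge {b : M → ℝ} (hb : ∀ y, 0 < b y) {x : M}
    (hΔb2 : Δ (fun y => b y ^ (2 : ℝ)) x ≥ 4 * Γ b b x - 3 * b x ^ (4 : ℝ))
    {s : ℝ} (hs : 0 ≤ s) :
    Δ (fun y => b y ^ (2 * s)) x ≥ b x ^ (2 * s - 2) * (4 * s ^ 2 * Γ b b x - 3 * s * b x ^ 4) := by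
  have hbΔb : b x * Δ b x ≥ Γ b b x - 3 / 2 * b x ^ 4 := by
    rw [hΔpow b 2 hb x] at hΔb2
    norm_num at hΔb2
    linarith
  have hpow : b x ^ (2 * s - 1) = b x ^ (2 * s - 2) * b x := by
    rw [← Real.rpow_add_one (hb x).ne']
    congr 1
    ring
  rw [hΔpow b (2 * s) hb x, hpow]
  have hA := Real.rpow_pos_of_pos (hb x) (2 * s - 2)
  linarith [mul_le_mul_of_nonneg_left hbΔb (by positivity : 0 ≤ 2 * s * b x ^ (2 * s - 2))]

theorem laplacian_rpow_ge {v : M → ℝ} (hv : ∀ y, 0 < v y) {x : M} {c : ℝ}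
    (hΔv : Δ v x ≥ c * v x + (v x)⁻¹ * Γ v v x) {q : ℝ} (hq : 0 ≤ q) :
    Δ (fun y => v y ^ q) x ≥ v x ^ (q - 2) * (q * c * v x ^ 2 + q ^ 2 * Γ v v x) := by
  have hvΔv : v x * Δ v x ≥ c * v x ^ 2 + Γ v v x := by
    calc v x * Δ v x ≥ v x * (c * v x + (v x)⁻¹ * Γ v v x) :=
          mul_le_mul_of_nonneg_left hΔv (hv x).le
      _ = c * v x ^ 2 + Γ v v x := by rw [mul_add, mul_inv_cancel_left₀ (hv x).ne']; ring
  have hpow : v x ^ (q - 1) = v x ^ (q - 2) * v x := by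
    rw [← Real.rpow_add_one (hv x).ne']
    congr 1
    ring
  rw [hΔpow v q hv x, hpow]
  have hC := Real.rpow_pos_of_pos (hv x) (q - 2)
  linarith [mul_le_mul_of_nonneg_left hvΔv (by positivity : 0 ≤ q * v x ^ (q - 2))]

end CarreDuChamp

theorem stmt17_general {M : Type*}
    (Δ : (M → ℝ) → (M → ℝ)) (Γ : (M → ℝ) → (M → ℝ) → (M → ℝ))
    (hΓnonneg : ∀ f x, 0 ≤ Γ f f x)
    (hΓCS : ∀ f g x, (Γ f g x)^2 ≤ Γ f f x * Γ g g x)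
    (hprod : ∀ f g : M → ℝ, ∀ x,
      Δ (fun y => f y * g y) x = f x * Δ g x + g x * Δ f x + 2 * Γ f g x)
    (hΓpow : ∀ (f g : M → ℝ) (a : ℝ), (∀ y, 0 < f y) → ∀ x,
      Γ (fun y => f y ^ a) g x = a * f x ^ (a - 1) * Γ f g x)
    (hΔpow : ∀ (f : M → ℝ) (a : ℝ), (∀ y, 0 < f y) → ∀ x,
      Δ (fun y => f y ^ a) x
        = a * f x ^ (a - 1) * Δ f x + a * (a - 1) * f x ^ (a - 2) * Γ f f x)
    (b v : M → ℝ) (hb : ∀ x, 0 < b x) (hv : ∀ x, 0 < v x)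
    (hΔb2 : ∀ x, Δ (fun y => b y ^ (2 : ℝ)) x ≥ 4 * Γ b b x - 3 * b x ^ (4 : ℝ))
    (hΔv : ∀ x, Δ v x ≥ b x ^ (2 : ℝ) * v x + (v x)⁻¹ * Γ v v x)
    (s q : ℝ) (hs : 1 ≤ s) (hq : 1 ≤ q) :
    ∀ x, Δ (fun y => b y ^ (2 * s) * v y ^ q) x
      ≥ (q - 3 * s) * b x ^ (2 * s + 2) * v x ^ q := by
  intro x
  have hB := laplacian_rpow_two_mul_ge hΔpow hb (hΔb2 x) (by linarith : 0 ≤ s)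
  have hV := laplacian_rpow_ge hΔpow hv (hΔv x) (by linarith : 0 ≤ q)
  have hquad := quadratic_form_nonneg_of_sq_le_mul (a := 2 * s * v x) (c := q * b x)
    (hΓnonneg b x) (hΓnonneg v x) (hΓCS b v x)
  rw [hprod, carreDuChamp_rpow_rpow hprod hΓpow hb hv]
  set A := b x ^ (2 * s - 2)
  set C := v x ^ (q - 2)
  have hA : 0 < A := Real.rpow_pos_of_pos (hb x) _
  have hC : 0 < C := Real.rpow_pos_of_pos (hv x) _
  rw [Real.rpow_two] at hV
  have hb2 : b x ^ (2 * s) = A * b x ^ 2 :=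
    Real.rpow_eq_rpow_mul_pow_of_eq_add (hb x).ne' 2 (by push_cast; ring)
  have hb1 : b x ^ (2 * s - 1) = A * b x ^ 1 :=
    Real.rpow_eq_rpow_mul_pow_of_eq_add (hb x).ne' 1 (by push_cast; ring)
  have hb4 : b x ^ (2 * s + 2) = A * b x ^ 4 :=
    Real.rpow_eq_rpow_mul_pow_of_eq_add (hb x).ne' 4 (by push_cast; ring)
  have hv2 : v x ^ q = C * v x ^ 2 :=
    Real.rpow_eq_rpow_mul_pow_of_eq_add (hv x).ne' 2 (by push_cast; ring)
  have hv1 : v x ^ (q - 1) = C * v x ^ 1 :=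
    Real.rpow_eq_rpow_mul_pow_of_eq_add (hv x).ne' 1 (by push_cast; ring)
  rw [hb2, hb1, hb4, hv2, hv1]
  linarith [mul_le_mul_of_nonneg_left hV (by positivity : 0 ≤ A * b x ^ 2),
    mul_le_mul_of_nonneg_left hB (by positivity : 0 ≤ C * v x ^ 2),
    mul_nonneg (mul_pos hA hC).le hquad]

/-- On a Riemannian manifold (encoded abstractly via a Laplace-type
operator Δ together with its carré du champ Γ f g = ⟨∇f, ∇g⟩, satisfying the standard
symmetry, nonnegativity, Cauchy–Schwarz, product rule and chain rule for powers), if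
positive functions b, v satisfy Δ(b²) ≥ 4|∇b|² − 3b⁴ and Δv ≥ b²v + v⁻¹|∇v|², then for
all s, q ≥ 1, Δ(b^{2s} v^q) ≥ (q − 3s) b^{2s+2} v^q pointwise. -/
theorem stmt17 {M : Type*}
    (Δ : (M → ℝ) → (M → ℝ)) (Γ : (M → ℝ) → (M → ℝ) → (M → ℝ))
    (hΓsymm : ∀ f g, Γ f g = Γ g f)
    (hΓnonneg : ∀ f x, 0 ≤ Γ f f x)
    (hΓCS : ∀ f g x, (Γ f g x)^2 ≤ Γ f f x * Γ g g x)
    (hprod : ∀ f g : M → ℝ, ∀ x,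
      Δ (fun y => f y * g y) x = f x * Δ g x + g x * Δ f x + 2 * Γ f g x)
    (hΓpow : ∀ (f g : M → ℝ) (a : ℝ), (∀ y, 0 < f y) → ∀ x,
      Γ (fun y => f y ^ a) g x = a * f x ^ (a - 1) * Γ f g x)
    (hΔpow : ∀ (f : M → ℝ) (a : ℝ), (∀ y, 0 < f y) → ∀ x,
      Δ (fun y => f y ^ a) x
        = a * f x ^ (a - 1) * Δ f x + a * (a - 1) * f x ^ (a - 2) * Γ f f x)
    (b v : M → ℝ) (hb : ∀ x, 0 < b x) (hv : ∀ x, 0 < v x)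
    (hΔb2 : ∀ x, Δ (fun y => b y ^ (2 : ℝ)) x ≥ 4 * Γ b b x - 3 * b x ^ (4 : ℝ))
    (hΔv : ∀ x, Δ v x ≥ b x ^ (2 : ℝ) * v x + (v x)⁻¹ * Γ v v x)
    (s q : ℝ) (hs : 1 ≤ s) (hq : 1 ≤ q) :
    ∀ x, Δ (fun y => b y ^ (2 * s) * v y ^ q) x
      ≥ (q - 3 * s) * b x ^ (2 * s + 2) * v x ^ q :=
  stmt17_general Δ Γ hΓnonneg hΓCS hprod hΓpow hΔpow b v hb hv hΔb2 hΔv s q hs hq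
end
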